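/- arXiv:2209.09211 — 5 statements merged into one kernel-verified Lean document; each statement's English description precedes it below -/
import Mathlib

section
/- Let d ≥ K ≥ 2, n ≥ 1, N = Kn, and τ > 0. For every W ∈ OB(d,K) and every H ∈ OB(d,N), the cross-entropy risk satisfies f(W,H) ≥ log(1 + (K−1)·exp(−Kτ/(K−1))). -/
open scoped BigOperators

/-- Cross-entropy loss: `L_CE(z,k) = log (∑_ℓ exp (z_ℓ)) − z_k`. -/
noncomputable def LCE {K : ℕ} (z : Fin K → ℝ) (k : Fin K) : ℝ :=
  Real.log (∑ ℓ, Real.exp (z ℓ)) - z k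

/-- The oblique manifold: matrices all of whose columns have unit Euclidean norm. -/
def OB (p : ℕ) (ι : Type) [Fintype ι] : Set (Matrix (Fin p) ι ℝ) :=
  {M | ∀ j, ∑ i, (M i j) ^ 2 = 1}

/-- The cross-entropy risk `f(W,H) = (1/N) ∑_k ∑_i L_CE(τ Wᵀ h_{k,i}, k)` with `N = K n`. -/
noncomputable def ceRisk {d K n : ℕ} (τ : ℝ) (W : Matrix (Fin d) (Fin K) ℝ)
    (H : Matrix (Fin d) (Fin K × Fin n) ℝ) : ℝ :=
  (1 / ((K : ℝ) * n)) * ∑ k : Fin K, ∑ i : Fin n,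
    LCE (fun ℓ => τ * ∑ r, W r ℓ * H r (k, i)) k


/-! By AM–GM (convexity of `exp`), the loss of a sample with logits `z` and label `k` is at least
`g ((∑_ℓ z_ℓ - K z_k) / (K - 1))`, where `g x = log (1 + (K - 1) eˣ)` is convex and increasing;
by Jensen the risk is then at least `g` of the averaged argument. For the sample `h_{k,i}` that
argument is `τ ⟪∑_ℓ w_ℓ - K w_k, h_{k,i}⟫ / (K - 1) ≥ -τ ‖∑_ℓ w_ℓ - K w_k‖ / (K - 1)`, and
`∑_k ‖∑_ℓ w_ℓ - K w_k‖² = K³ - K ‖∑_ℓ w_ℓ‖² ≤ K³`, so by Cauchy–Schwarz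
`∑_k ‖∑_ℓ w_ℓ - K w_k‖ ≤ K²` and the average is at least `-K τ / (K - 1)`. -/

open Finset Real

lemma ConvexOn.map_sum_div_card_le {ι : Type*} {f : ℝ → ℝ} (hf : ConvexOn ℝ Set.univ f)
    {s : Finset ι} (hs : s.Nonempty) (x : ι → ℝ) :
    f ((∑ i ∈ s, x i) / #s) ≤ (∑ i ∈ s, f (x i)) / #s := by
  have hcard : (0 : ℝ) < #s := by exact_mod_cast hs.card_pos
  have := hf.map_sum_le (t := s) (w := fun _ => (#s : ℝ)⁻¹) (p := x)
    (fun _ _ => by positivity) (by simp [hcard.ne']) (fun _ _ => Set.mem_univ _)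
  simp only [smul_eq_mul] at this
  rwa [← mul_sum, ← mul_sum, inv_mul_eq_div, inv_mul_eq_div] at this

lemma card_mul_exp_sum_div_card_le {ι : Type*} (s : Finset ι) (x : ι → ℝ) :
    #s * exp ((∑ i ∈ s, x i) / #s) ≤ ∑ i ∈ s, exp (x i) := by
  rcases s.eq_empty_or_nonempty with rfl | hs
  · simp
  have hcard : (0 : ℝ) < #s := by exact_mod_cast hs.card_pos
  have := convexOn_exp.map_sum_div_card_le hs x
  rwa [le_div_iff₀ hcard, mul_comm] at this

noncomputable def logOneAddMulExp (c x : ℝ) : ℝ := log (1 + c * exp x)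

section logOneAddMulExp

variable {c : ℝ}

lemma hasDerivAt_logOneAddMulExp (hc : 0 ≤ c) (x : ℝ) :
    HasDerivAt (logOneAddMulExp c) (1 - (1 + c * exp x)⁻¹) x := by
  have hpos : 0 < 1 + c * exp x := by positivity
  show HasDerivAt (fun y => log (1 + c * exp y)) _ x
  convert (((hasDerivAt_exp x).const_mul c).const_add 1).log hpos.ne' using 1
  field_simp
  ring

lemma monotone_logOneAddMulExp (hc : 0 ≤ c) : Monotone (logOneAddMulExp c) :=
  fun _ _ hxy => log_le_log (by positivity) (by gcongr)

lemma convexOn_logOneAddMulExp (hc : 0 ≤ c) : ConvexOn ℝ Set.univ (logOneAddMulExp c) := by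
  refine Monotone.convexOn_univ_of_deriv
    (fun x => (hasDerivAt_logOneAddMulExp hc x).differentiableAt) fun x y hxy => ?_
  simp only [(hasDerivAt_logOneAddMulExp hc _).deriv]
  gcongr

end logOneAddMulExp

lemma logOneAddMulExp_le_LCE {K : ℕ} (z : Fin K → ℝ) (k : Fin K) :
    logOneAddMulExp (K - 1) ((∑ ℓ, z ℓ - K * z k) / (K - 1)) ≤ LCE z k := by
  set s := univ.erase k
  have hcard : (#s : ℝ) = K - 1 := by
    rw [card_erase_of_mem (mem_univ k), card_univ, Fintype.card_fin,
      Nat.cast_pred (Fin.pos k)]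
  have hgaps : ∑ ℓ ∈ s, (z ℓ - z k) = ∑ ℓ, z ℓ - K * z k := by
    rw [sum_sub_distrib, sum_const, nsmul_eq_mul, hcard, sum_erase_eq_sub (mem_univ k)]
    ring
  have hLCE : LCE z k = log (1 + ∑ ℓ ∈ s, exp (z ℓ - z k)) := by
    have hsum : 0 < ∑ ℓ, exp (z ℓ) := sum_pos (fun _ _ => exp_pos _) ⟨k, mem_univ k⟩
    rw [LCE, ← log_exp (z k), ← log_div hsum.ne' (exp_ne_zero _), sum_div,
      ← add_sum_erase _ _ (mem_univ k)]
    simp only [← exp_sub, sub_self, exp_zero, log_exp, s]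
  rw [hLCE, logOneAddMulExp, ← hcard, ← hgaps]
  exact log_le_log (by positivity) (by gcongr; exact card_mul_exp_sum_div_card_le s _)

lemma sum_sq_sum_sub_card_mul {ι : Type*} [Fintype ι] (a : ι → ℝ) :
    ∑ k, (∑ ℓ, a ℓ - Fintype.card ι * a k) ^ 2
      = (Fintype.card ι : ℝ) ^ 2 * ∑ k, a k ^ 2 - Fintype.card ι * (∑ ℓ, a ℓ) ^ 2 := by
  simp only [sub_sq, sum_add_distrib, sum_sub_distrib, sum_const, card_univ, nsmul_eq_mul,
    mul_pow, ← mul_sum]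
  ring

lemma neg_sqrt_sum_sq_le_sum_mul {ι : Type*} (s : Finset ι) (v h : ι → ℝ)
    (hh : ∑ i ∈ s, h i ^ 2 = 1) : -√(∑ i ∈ s, v i ^ 2) ≤ ∑ i ∈ s, v i * h i := by
  have := sum_mul_le_sqrt_mul_sqrt s (fun i => -v i) h
  simp only [neg_mul, sum_neg_distrib, neg_sq, hh, sqrt_one, mul_one] at this
  linarith

section gapDirection

variable {d K : ℕ}

def gapDirection (W : Matrix (Fin d) (Fin K) ℝ) (k : Fin K) (r : Fin d) : ℝ :=
  ∑ ℓ, W r ℓ - K * W r k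

lemma sum_logits_sub_card_mul (τ : ℝ) (W : Matrix (Fin d) (Fin K) ℝ) (h : Fin d → ℝ)
    (k : Fin K) :
    ∑ ℓ, τ * ∑ r, W r ℓ * h r - K * (τ * ∑ r, W r k * h r)
      = τ * ∑ r, gapDirection W k r * h r := by
  simp only [gapDirection, sub_mul, sum_sub_distrib, sum_mul, mul_sum, mul_sub]
  rw [sum_comm]
  ring_nf

lemma sum_sum_sq_gapDirection_le {W : Matrix (Fin d) (Fin K) ℝ} (hW : W ∈ OB d (Fin K)) :
    ∑ k, ∑ r, gapDirection W k r ^ 2 ≤ (K : ℝ) ^ 3 := by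
  have hnorms : ∑ r, ∑ k, W r k ^ 2 = K := by
    rw [sum_comm]
    simp [hW _]
  have hsums : 0 ≤ ∑ r, (∑ ℓ, W r ℓ) ^ 2 := sum_nonneg fun _ _ => sq_nonneg _
  have hrows (r : Fin d) := sum_sq_sum_sub_card_mul (W r)
  rw [Fintype.card_fin] at hrows
  rw [sum_comm]
  simp only [gapDirection, hrows, sum_sub_distrib, ← mul_sum, hnorms]
  nlinarith [mul_nonneg K.cast_nonneg hsums]

lemma sum_sqrt_sum_sq_gapDirection_le {W : Matrix (Fin d) (Fin K) ℝ} (hW : W ∈ OB d (Fin K)) :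
    ∑ k, √(∑ r, gapDirection W k r ^ 2) ≤ (K : ℝ) ^ 2 :=
  calc ∑ k, √(∑ r, gapDirection W k r ^ 2) = ∑ k, √1 * √(∑ r, gapDirection W k r ^ 2) := by
        simp
    _ ≤ √(∑ _k : Fin K, 1) * √(∑ k, ∑ r, gapDirection W k r ^ 2) :=
        sum_sqrt_mul_sqrt_le _ (fun _ => zero_le_one) fun _ => sum_nonneg fun _ _ => sq_nonneg _
    _ ≤ √K * √(K ^ 3) := by
        gcongr
        · simp
        · exact sum_sum_sq_gapDirection_le hW
    _ = K ^ 2 := by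
        rw [← sqrt_mul (by positivity), show (K : ℝ) * K ^ 3 = (K ^ 2) ^ 2 by ring,
          sqrt_sq (by positivity)]

lemma neg_sq_mul_le_sum_gapDirection_mul {n : ℕ} {W : Matrix (Fin d) (Fin K) ℝ}
    {H : Matrix (Fin d) (Fin K × Fin n) ℝ} (hW : W ∈ OB d (Fin K))
    (hH : H ∈ OB d (Fin K × Fin n)) :
    -((K : ℝ) ^ 2 * n) ≤ ∑ p : Fin K × Fin n, ∑ r, gapDirection W p.1 r * H r p :=
  calc -((K : ℝ) ^ 2 * n) ≤ -(n * ∑ k, √(∑ r, gapDirection W k r ^ 2)) := by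
        have := sum_sqrt_sum_sq_gapDirection_le hW
        have : (0 : ℝ) ≤ n := n.cast_nonneg
        nlinarith
    _ = ∑ p : Fin K × Fin n, -√(∑ r, gapDirection W p.1 r ^ 2) := by
        simp [Fintype.sum_prod_type, mul_sum]
    _ ≤ _ := sum_le_sum fun p _ => neg_sqrt_sum_sq_le_sum_mul _ _ _ (hH p)

lemma logOneAddMulExp_gapDirection_le_LCE (τ : ℝ) (W : Matrix (Fin d) (Fin K) ℝ)
    (h : Fin d → ℝ) (k : Fin K) :
    logOneAddMulExp (K - 1) ((τ * ∑ r, gapDirection W k r * h r) / (K - 1))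
      ≤ LCE (fun ℓ => τ * ∑ r, W r ℓ * h r) k := by
  rw [← sum_logits_sub_card_mul]
  exact logOneAddMulExp_le_LCE _ k

lemma neg_mul_div_le_mean_gapDirection_mul {n : ℕ} {τ : ℝ} {W : Matrix (Fin d) (Fin K) ℝ}
    {H : Matrix (Fin d) (Fin K × Fin n) ℝ} (hK : 2 ≤ K) (hn : 1 ≤ n) (hτ : 0 ≤ τ)
    (hW : W ∈ OB d (Fin K)) (hH : H ∈ OB d (Fin K × Fin n)) :
    -(K * τ) / (K - 1)
      ≤ (∑ p : Fin K × Fin n, (τ * ∑ r, gapDirection W p.1 r * H r p) / (K - 1)) / (K * n) := by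
  have hc : (0 : ℝ) < K - 1 := by
    have : (2 : ℝ) ≤ K := by exact_mod_cast hK
    linarith
  have hn' : (0 : ℝ) < n := by exact_mod_cast hn
  calc -(K * τ) / (K - 1) = τ * -((K : ℝ) ^ 2 * n) / (K - 1) / (K * n) := by
        field_simp
    _ ≤ (τ * ∑ p : Fin K × Fin n, ∑ r, gapDirection W p.1 r * H r p) / (K - 1) / (K * n) := by
        gcongr
        exact neg_sq_mul_le_sum_gapDirection_mul hW hH
    _ = _ := by
        simp only [← sum_div, ← mul_sum]

end gapDirection

theorem ceRisk_lower_bound_general (d K n : ℕ) (hK : 2 ≤ K) (hn : 1 ≤ n)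
    (τ : ℝ) (hτ : 0 < τ)
    (W : Matrix (Fin d) (Fin K) ℝ) (H : Matrix (Fin d) (Fin K × Fin n) ℝ)
    (hW : W ∈ OB d (Fin K)) (hH : H ∈ OB d (Fin K × Fin n)) :
    Real.log (1 + ((K : ℝ) - 1) * Real.exp (-((K : ℝ) * τ) / ((K : ℝ) - 1)))
      ≤ ceRisk τ W H := by
  have hc : (0 : ℝ) ≤ K - 1 := sub_nonneg.2 (by exact_mod_cast (by omega : 1 ≤ K))
  have hN : (#(univ : Finset (Fin K × Fin n)) : ℝ) = K * n := by simp
  set t : Fin K × Fin n → ℝ := fun p => (τ * ∑ r, gapDirection W p.1 r * H r p) / (K - 1)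
  calc log (1 + ((K : ℝ) - 1) * exp (-(K * τ) / (K - 1)))
      = logOneAddMulExp (K - 1) (-(K * τ) / (K - 1)) := rfl
    _ ≤ logOneAddMulExp (K - 1) ((∑ p, t p) / (K * n)) :=
        monotone_logOneAddMulExp hc
          (neg_mul_div_le_mean_gapDirection_mul hK hn hτ.le hW hH)
    _ ≤ (∑ p, logOneAddMulExp (K - 1) (t p)) / (K * n) := by
        rw [← hN]
        exact (convexOn_logOneAddMulExp hc).map_sum_div_card_le
          ⟨(⟨0, by omega⟩, ⟨0, hn⟩), mem_univ _⟩ t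
    _ ≤ (∑ p : Fin K × Fin n, LCE (fun ℓ => τ * ∑ r, W r ℓ * H r p) p.1) / (K * n) := by
        gcongr with p
        exact logOneAddMulExp_gapDirection_le_LCE τ W (fun r => H r p) p.1
    _ = ceRisk τ W H := by
        rw [ceRisk, Fintype.sum_prod_type, one_div_mul_eq_div]

theorem ceRisk_lower_bound (d K n : ℕ) (hK : 2 ≤ K) (hdK : K ≤ d) (hn : 1 ≤ n)
    (τ : ℝ) (hτ : 0 < τ)
    (W : Matrix (Fin d) (Fin K) ℝ) (H : Matrix (Fin d) (Fin K × Fin n) ℝ)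
    (hW : W ∈ OB d (Fin K)) (hH : H ∈ OB d (Fin K × Fin n)) :
    Real.log (1 + ((K : ℝ) - 1) * Real.exp (-((K : ℝ) * τ) / ((K : ℝ) - 1)))
      ≤ ceRisk τ W H :=
  ceRisk_lower_bound_general d K n hK hn τ hτ W H hW hH
end

section
/- Let d ≥ K ≥ 2, n ≥ 1, N = Kn, and τ > 0. For (W,H) ∈ OB(d,K) × OB(d,N), equality f(W,H) = log(1 + (K−1)·exp(−Kτ/(K−1))) holds if and only if (W,H) satisfies the neural collapse conditions (NC1), (NC2), and (NC3). -/
open scoped BigOperators Matrix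

/-- Class-mean matrix: the `k`-th column is `h̄_k = (1/n) ∑_i h_{k,i}`. -/
noncomputable def hbar {d K n : ℕ} (H : Matrix (Fin d) (Fin K × Fin n) ℝ) :
    Matrix (Fin d) (Fin K) ℝ :=
  fun r k => (1 / (n : ℝ)) * ∑ i, H r (k, i)

/-- The neural collapse conditions (NC1), (NC2), (NC3). -/
noncomputable def NeuralCollapse {d K n : ℕ} (W : Matrix (Fin d) (Fin K) ℝ)
    (H : Matrix (Fin d) (Fin K × Fin n) ℝ) : Prop :=
  -- (NC1) variability collapse
  (∀ k i r, H r (k, i) = hbar H r k) ∧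
  -- (NC2) convergence to simplex ETF
  (hbar H ∈ OB d (Fin K) ∧
    (hbar H)ᵀ * hbar H =
      ((K : ℝ) - 1)⁻¹ •
        ((K : ℝ) • (1 : Matrix (Fin K) (Fin K) ℝ) - Matrix.of fun _ _ => (1 : ℝ))) ∧
  -- (NC3) convergence to self-duality
  (∀ r k, W r k = hbar H r k)

/-!
For a sample of class `k`, `LCE z k = log (1 + ∑_{ℓ ≠ k} exp (z ℓ - z k))` is a convex function of
the logit gaps. Its tangent plane at the gaps `-K τ / (K - 1)` of a simplex ETF bounds the loss
below by `ceLowerBound K τ` plus a positive multiple of `τ (⟪∑ ℓ, w ℓ - K • w k, h⟫ + K)`. Over one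
sample of each class these linear terms add up to something nonnegative, by the identity
`∑ k, ‖K • w k - ∑ ℓ, w ℓ - K • h k‖² + K ‖∑ ℓ, w ℓ‖² = 2 K (∑ k, ⟪∑ ℓ, w ℓ - K • w k, h k⟫ + K²)`
for unit vectors. Equality forces both bounds to be tight: the squares vanish, so `h k = w k`, and
every logit gap equals `-K τ / (K - 1)`, which makes the Gram matrix of the `w k` a simplex ETF.
-/

open Real Finset
open scoped RealInnerProductSpace

private lemma sub_one_pos_of_two_le {K : ℕ} (hK : 2 ≤ K) : (0 : ℝ) < K - 1 := by
  have : (2 : ℝ) ≤ K := by exact_mod_cast hK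
  linarith

lemma exp_mul_one_add_sub_le (x y : ℝ) : exp y * (1 + (x - y)) ≤ exp x := by
  have h := add_one_le_exp (x - y)
  calc exp y * (1 + (x - y)) ≤ exp y * exp (x - y) := by gcongr; linarith
    _ = exp x := by rw [← exp_add, add_sub_cancel]

lemma exp_mul_one_add_sub_eq_iff {x y : ℝ} : exp y * (1 + (x - y)) = exp x ↔ x = y := by
  refine ⟨fun h => ?_, fun h => by simp [h]⟩
  by_contra hxy
  have h' := add_one_lt_exp (sub_ne_zero.mpr hxy)
  have : exp y * (1 + (x - y)) < exp y * exp (x - y) := by gcongr; linarith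
  rw [← exp_add, add_sub_cancel] at this
  exact this.ne h

section LogSumExp

variable {ι : Type*} (s : Finset ι) (v : ι → ℝ) (t₀ : ℝ)

/- The right side is a sum of gaps of tangent-line bounds for `exp`, hence nonnegative; `hq` is
what makes their linear parts cancel. -/
private lemma one_add_sum_exp_sub_eq {q : ℝ}
    (hq : q * (1 + s.card * exp t₀) = exp t₀ * ∑ ℓ ∈ s, (v ℓ - t₀)) :
    1 + ∑ ℓ ∈ s, exp (v ℓ) - (1 + s.card * exp t₀) * exp q
      = (exp 0 - exp q * (1 + (0 - q)))
        + ∑ ℓ ∈ s, (exp (v ℓ) - exp (t₀ + q) * (1 + (v ℓ - (t₀ + q)))) := by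
  simp only [sum_sub_distrib, sum_add_distrib, ← mul_sum, sum_const, nsmul_eq_mul, exp_add,
    exp_zero] at *
  linear_combination (-exp q) * hq

theorem log_one_add_sum_exp_ge :
    log (1 + s.card * exp t₀) + exp t₀ / (1 + s.card * exp t₀) * ∑ ℓ ∈ s, (v ℓ - t₀)
      ≤ log (1 + ∑ ℓ ∈ s, exp (v ℓ)) := by
  set q := exp t₀ / (1 + s.card * exp t₀) * ∑ ℓ ∈ s, (v ℓ - t₀) with hq
  have hB : 0 < 1 + s.card * exp t₀ := by positivity
  have hgap := one_add_sum_exp_sub_eq s v t₀ (q := q) (by rw [hq]; field_simp)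
  have h0 := exp_mul_one_add_sub_le 0 q
  have hs := sum_nonneg fun ℓ (_ : ℓ ∈ s) =>
    sub_nonneg.mpr (exp_mul_one_add_sub_le (v ℓ) (t₀ + q))
  rw [← log_exp q, ← log_mul hB.ne' (exp_pos _).ne']
  exact log_le_log (by positivity) (by linarith)

theorem log_one_add_sum_exp_eq_iff :
    log (1 + ∑ ℓ ∈ s, exp (v ℓ))
        = log (1 + s.card * exp t₀) + exp t₀ / (1 + s.card * exp t₀) * ∑ ℓ ∈ s, (v ℓ - t₀)
      ↔ ∀ ℓ ∈ s, v ℓ = t₀ := by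
  refine ⟨fun h => ?_, fun h => ?_⟩
  · set q := exp t₀ / (1 + s.card * exp t₀) * ∑ ℓ ∈ s, (v ℓ - t₀) with hq
    have hB : 0 < 1 + s.card * exp t₀ := by positivity
    have hsum : 1 + ∑ ℓ ∈ s, exp (v ℓ) = (1 + s.card * exp t₀) * exp q := by
      rw [← log_exp q, ← log_mul hB.ne' (exp_pos _).ne'] at h
      exact log_injOn_pos (Set.mem_Ioi.mpr (by positivity)) (Set.mem_Ioi.mpr (by positivity)) h
    have hgap := one_add_sum_exp_sub_eq s v t₀ (q := q) (by rw [hq]; field_simp)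
    have h0 := sub_nonneg.mpr (exp_mul_one_add_sub_le 0 q)
    have hs := fun ℓ (_ : ℓ ∈ s) => sub_nonneg.mpr (exp_mul_one_add_sub_le (v ℓ) (t₀ + q))
    have hq0 : q = 0 := (exp_mul_one_add_sub_eq_iff.mp (by linarith [sum_nonneg hs])).symm
    intro ℓ hℓ
    have := (sum_eq_zero_iff_of_nonneg hs).mp (by linarith [sum_nonneg hs]) ℓ hℓ
    simpa [hq0] using exp_mul_one_add_sub_eq_iff.mp (sub_eq_zero.mp this).symm
  · rw [sum_congr rfl fun ℓ hℓ => congrArg exp (h ℓ hℓ),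
      sum_congr rfl fun ℓ hℓ => sub_eq_zero.mpr (h ℓ hℓ)]
    simp

end LogSumExp

section Quadratic

variable {E : Type*} [NormedAddCommGroup E] [InnerProductSpace ℝ E] {ι : Type*} [Fintype ι]
  {w h : ι → E}

private lemma sum_norm_sub_sq_eq (hw : ∀ k, ‖w k‖ = 1) (hh : ∀ k, ‖h k‖ = 1) :
    ∑ k, ‖(Fintype.card ι : ℝ) • w k - ∑ ℓ, w ℓ - (Fintype.card ι : ℝ) • h k‖ ^ 2
        + Fintype.card ι * ‖∑ ℓ, w ℓ‖ ^ 2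
      = 2 * Fintype.card ι * (∑ k, ⟪∑ ℓ, w ℓ - (Fintype.card ι : ℝ) • w k, h k⟫
        + (Fintype.card ι : ℝ) ^ 2) := by
  set K : ℝ := (Fintype.card ι : ℝ)
  set s := ∑ ℓ, w ℓ
  have hsw : ∑ k, ⟪w k, s⟫ = ‖s‖ ^ 2 := by rw [← sum_inner, real_inner_self_eq_norm_sq]
  have hK : ‖K‖ = K := Real.norm_natCast _
  simp only [norm_sub_sq_real, norm_smul, inner_sub_left, real_inner_smul_left,
    real_inner_smul_right, hw, hh, hK, hsw, sum_add_distrib, sum_sub_distrib, ← mul_sum, sum_const,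
    card_univ, nsmul_eq_mul]
  ring

theorem neg_card_sq_le_sum_inner (hw : ∀ k, ‖w k‖ = 1) (hh : ∀ k, ‖h k‖ = 1) :
    -(Fintype.card ι : ℝ) ^ 2 ≤ ∑ k, ⟪∑ ℓ, w ℓ - (Fintype.card ι : ℝ) • w k, h k⟫ := by
  rcases isEmpty_or_nonempty ι with hι | hι
  · simp
  have hK : (0 : ℝ) < Fintype.card ι := by exact_mod_cast Fintype.card_pos
  have key := sum_norm_sub_sq_eq hw hh
  have : 0 ≤ 2 * Fintype.card ι * (∑ k, ⟪∑ ℓ, w ℓ - (Fintype.card ι : ℝ) • w k, h k⟫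
      + (Fintype.card ι : ℝ) ^ 2) := by
    rw [← key]; positivity
  nlinarith

theorem eq_of_sum_inner_eq_neg_card_sq (hw : ∀ k, ‖w k‖ = 1) (hh : ∀ k, ‖h k‖ = 1)
    (heq : ∑ k, ⟪∑ ℓ, w ℓ - (Fintype.card ι : ℝ) • w k, h k⟫ = -(Fintype.card ι : ℝ) ^ 2) :
    h = w := by
  rcases isEmpty_or_nonempty ι with hι | hι
  · exact Subsingleton.elim _ _
  have hK : (0 : ℝ) < Fintype.card ι := by exact_mod_cast Fintype.card_pos
  have key := sum_norm_sub_sq_eq hw hh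
  rw [heq, neg_add_cancel, mul_zero] at key
  have hsum := (add_eq_zero_iff_of_nonneg (by positivity) (by positivity)).mp key
  have hs : ∑ ℓ, w ℓ = 0 := by simpa [hK.ne'] using hsum.2
  funext k
  have := (sum_eq_zero_iff_of_nonneg fun k _ => by positivity).mp hsum.1 k (mem_univ k)
  rw [hs, sub_zero, ← smul_sub] at this
  simpa [hK.ne', sub_eq_zero, eq_comm] using this

end Quadratic

lemma LCE_eq_log_one_add_sum_exp_sub {K : ℕ} (z : Fin K → ℝ) (k : Fin K) :
    LCE z k = log (1 + ∑ ℓ ∈ univ.erase k, exp (z ℓ - z k)) := by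
  have hsplit : ∑ ℓ, exp (z ℓ) = exp (z k) * (1 + ∑ ℓ ∈ univ.erase k, exp (z ℓ - z k)) := by
    rw [← add_sum_erase _ _ (mem_univ k), mul_add, mul_one, mul_sum]
    simp only [← exp_add, add_sub_cancel]
  rw [LCE, hsplit, log_mul (exp_pos _).ne' (by positivity), log_exp, add_sub_cancel_left]

lemma card_erase_univ_fin {K : ℕ} (k : Fin K) : ((univ.erase k).card : ℝ) = K - 1 := by
  rw [card_erase_of_mem (mem_univ k), card_univ, Fintype.card_fin,
    Nat.cast_sub (Nat.one_le_of_lt k.pos), Nat.cast_one]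

section Tangent

variable {K : ℕ} (z : Fin K → ℝ) (k : Fin K) (t₀ : ℝ)

theorem LCE_ge_tangent :
    log (1 + ((K : ℝ) - 1) * exp t₀)
        + exp t₀ / (1 + ((K : ℝ) - 1) * exp t₀) * ∑ ℓ ∈ univ.erase k, (z ℓ - z k - t₀)
      ≤ LCE z k := by
  rw [LCE_eq_log_one_add_sum_exp_sub, ← card_erase_univ_fin k]
  exact log_one_add_sum_exp_ge _ (fun ℓ => z ℓ - z k) t₀

theorem LCE_eq_tangent_iff :
    LCE z k = log (1 + ((K : ℝ) - 1) * exp t₀)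
        + exp t₀ / (1 + ((K : ℝ) - 1) * exp t₀) * ∑ ℓ ∈ univ.erase k, (z ℓ - z k - t₀)
      ↔ ∀ ℓ, ℓ ≠ k → z ℓ - z k = t₀ := by
  rw [LCE_eq_log_one_add_sum_exp_sub, ← card_erase_univ_fin k,
    log_one_add_sum_exp_eq_iff _ (fun ℓ => z ℓ - z k) t₀]
  simp only [mem_erase, mem_univ, and_true]

end Tangent

/-- The cross-entropy loss of a sample whose logits are `τ` times the Gram entries of a simplex
ETF: each wrong-class logit is `K τ / (K - 1)` below the true one. -/
noncomputable def ceLowerBound (K : ℕ) (τ : ℝ) : ℝ :=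
  log (1 + ((K : ℝ) - 1) * exp (-((K : ℝ) * τ) / ((K : ℝ) - 1)))

/-- The derivative of `log (1 + ∑ ℓ ∈ univ.erase k, exp (g ℓ))` in each gap `g ℓ`, at the gaps
`-K τ / (K - 1)` of a simplex ETF. -/
noncomputable def ceTangentSlope (K : ℕ) (τ : ℝ) : ℝ :=
  exp (-((K : ℝ) * τ) / ((K : ℝ) - 1)) / (1 + ((K : ℝ) - 1) * exp (-((K : ℝ) * τ) / ((K : ℝ) - 1)))

lemma ceTangentSlope_pos {K : ℕ} (hK : 2 ≤ K) (τ : ℝ) : 0 < ceTangentSlope K τ := by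
  have := sub_one_pos_of_two_le hK
  unfold ceTangentSlope
  positivity

section OneSamplePerClass

variable {E : Type*} [NormedAddCommGroup E] [InnerProductSpace ℝ E] {K : ℕ} {τ : ℝ}
  {w h : Fin K → E}

private lemma sum_erase_logit_gap (hK : (K : ℝ) - 1 ≠ 0) (k : Fin K) :
    ∑ ℓ ∈ univ.erase k, (τ * ⟪w ℓ, h k⟫ - τ * ⟪w k, h k⟫ - -((K : ℝ) * τ) / ((K : ℝ) - 1))
      = τ * (⟪∑ ℓ, w ℓ - (K : ℝ) • w k, h k⟫ + K) := by
  rw [sum_erase_eq_sub (mem_univ k), inner_sub_left, real_inner_smul_left]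
  simp only [sum_sub_distrib, ← mul_sum, sum_inner, sum_const, card_univ, Fintype.card_fin,
    nsmul_eq_mul]
  field_simp
  ring

private lemma logit_gap_eq_iff (hK : (K : ℝ) - 1 ≠ 0) (hτ : τ ≠ 0) {ℓ k : Fin K}
    (hwk : ‖w k‖ = 1) :
    τ * ⟪w ℓ, w k⟫ - τ * ⟪w k, w k⟫ = -((K : ℝ) * τ) / ((K : ℝ) - 1)
      ↔ ⟪w ℓ, w k⟫ = -((K : ℝ) - 1)⁻¹ := by
  rw [real_inner_self_eq_norm_sq, hwk]
  constructor <;> intro hgap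
  · field_simp at hgap ⊢
    linear_combination hgap
  · rw [hgap]; field_simp; ring

private lemma LCE_inner_ge (hK : (K : ℝ) - 1 ≠ 0) (k : Fin K) :
    ceLowerBound K τ + ceTangentSlope K τ * (τ * (⟪∑ ℓ, w ℓ - (K : ℝ) • w k, h k⟫ + K))
      ≤ LCE (fun ℓ => τ * ⟪w ℓ, h k⟫) k := by
  rw [← sum_erase_logit_gap hK]
  exact LCE_ge_tangent _ k _

private lemma LCE_inner_eq_iff (hK : (K : ℝ) - 1 ≠ 0) (k : Fin K) :
    LCE (fun ℓ => τ * ⟪w ℓ, h k⟫) k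
        = ceLowerBound K τ + ceTangentSlope K τ * (τ * (⟪∑ ℓ, w ℓ - (K : ℝ) • w k, h k⟫ + K))
      ↔ ∀ ℓ, ℓ ≠ k → τ * ⟪w ℓ, h k⟫ - τ * ⟪w k, h k⟫ = -((K : ℝ) * τ) / ((K : ℝ) - 1) := by
  rw [← sum_erase_logit_gap hK]
  exact LCE_eq_tangent_iff _ k _

private lemma sum_ceLowerBound_add_tangent (c : ℝ) (a : Fin K → ℝ) :
    ∑ k, (ceLowerBound K τ + c * (τ * (a k + K)))
      = K * ceLowerBound K τ + c * τ * (∑ k, a k + (K : ℝ) ^ 2) := by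
  simp only [sum_add_distrib, ← mul_sum, sum_const, card_univ, Fintype.card_fin, nsmul_eq_mul]
  ring

theorem card_mul_ceLowerBound_le_sum_LCE (hK : 2 ≤ K) (hτ : 0 < τ) (hw : ∀ k, ‖w k‖ = 1)
    (hh : ∀ k, ‖h k‖ = 1) :
    K * ceLowerBound K τ ≤ ∑ k, LCE (fun ℓ => τ * ⟪w ℓ, h k⟫) k := by
  have hK1 := sub_one_pos_of_two_le hK
  have hT := neg_card_sq_le_sum_inner hw hh
  rw [Fintype.card_fin] at hT
  calc K * ceLowerBound K τ
      ≤ K * ceLowerBound K τ + ceTangentSlope K τ * τ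
          * (∑ k, ⟪∑ ℓ, w ℓ - (K : ℝ) • w k, h k⟫ + (K : ℝ) ^ 2) :=
        le_add_of_nonneg_right
          (mul_nonneg (mul_pos (ceTangentSlope_pos hK τ) hτ).le (by linarith))
    _ = _ := (sum_ceLowerBound_add_tangent _ _).symm
    _ ≤ _ := sum_le_sum fun k _ => LCE_inner_ge hK1.ne' k

theorem sum_LCE_eq_card_mul_ceLowerBound_iff (hK : 2 ≤ K) (hτ : 0 < τ) (hw : ∀ k, ‖w k‖ = 1)
    (hh : ∀ k, ‖h k‖ = 1) :
    ∑ k, LCE (fun ℓ => τ * ⟪w ℓ, h k⟫) k = K * ceLowerBound K τ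
      ↔ h = w ∧ ∀ ℓ k, ℓ ≠ k → ⟪w ℓ, w k⟫ = -((K : ℝ) - 1)⁻¹ := by
  have hK1 := sub_one_pos_of_two_le hK
  constructor
  · intro heq
    have hT := neg_card_sq_le_sum_inner hw hh
    rw [Fintype.card_fin] at hT
    have hlow := sum_le_sum fun k (_ : k ∈ univ) =>
      LCE_inner_ge (w := w) (h := h) (τ := τ) hK1.ne' k
    rw [sum_ceLowerBound_add_tangent, heq] at hlow
    have hT0 : ∑ k, ⟪∑ ℓ, w ℓ - (K : ℝ) • w k, h k⟫ + (K : ℝ) ^ 2 = 0 := by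
      nlinarith [mul_pos (ceTangentSlope_pos hK τ) hτ]
    have hhw : h = w := eq_of_sum_inner_eq_neg_card_sq hw hh (by rw [Fintype.card_fin]; linarith)
    have heach := (sum_eq_sum_iff_of_le fun k (_ : k ∈ univ) =>
      LCE_inner_ge (w := w) (h := h) (τ := τ) hK1.ne' k).mp
      (by rw [sum_ceLowerBound_add_tangent, hT0, heq]; ring)
    subst hhw
    exact ⟨rfl, fun ℓ k hℓk => (logit_gap_eq_iff hK1.ne' hτ.ne' (hw k)).mp
      ((LCE_inner_eq_iff hK1.ne' k).mp (heach k (mem_univ k)).symm ℓ hℓk)⟩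
  · rintro ⟨rfl, hgram⟩
    have hgap : ∀ k, ∀ ℓ, ℓ ≠ k →
        τ * ⟪h ℓ, h k⟫ - τ * ⟪h k, h k⟫ = -((K : ℝ) * τ) / ((K : ℝ) - 1) :=
      fun k ℓ hℓk => (logit_gap_eq_iff hK1.ne' hτ.ne' (hw k)).mpr (hgram ℓ k hℓk)
    have hk : ∀ k, LCE (fun ℓ => τ * ⟪h ℓ, h k⟫) k = ceLowerBound K τ := fun k => by
      rw [(LCE_eq_tangent_iff _ k _).mpr (hgap k), sum_eq_zero fun ℓ hℓ =>
        sub_eq_zero.mpr (hgap k ℓ (mem_erase.mp hℓ).1), mul_zero, add_zero, ceLowerBound]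
    simp [hk]

end OneSamplePerClass

section Matrices

variable {d : ℕ} {κ κ' : Type}

def columnVec (M : Matrix (Fin d) κ ℝ) (j : κ) : EuclideanSpace ℝ (Fin d) :=
  WithLp.toLp 2 fun r => M r j

lemma inner_columnVec (A : Matrix (Fin d) κ ℝ) (B : Matrix (Fin d) κ' ℝ) (i : κ) (j : κ') :
    ⟪columnVec A i, columnVec B j⟫ = ∑ r, A r i * B r j := by
  simp [columnVec, EuclideanSpace.inner_toLp_toLp, dotProduct, mul_comm]

lemma columnVec_eq_iff {A : Matrix (Fin d) κ ℝ} {B : Matrix (Fin d) κ' ℝ} {i : κ} {j : κ'} :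
    columnVec A i = columnVec B j ↔ ∀ r, A r i = B r j := by
  simp [columnVec, funext_iff]

lemma norm_columnVec_of_mem_OB [Fintype κ] {M : Matrix (Fin d) κ ℝ} (hM : M ∈ OB d κ) (j : κ) :
    ‖columnVec M j‖ = 1 := by
  have h : ‖columnVec M j‖ ^ 2 = 1 := by
    rw [← real_inner_self_eq_norm_sq, inner_columnVec, ← hM j]
    simp only [sq]
  exact (pow_eq_one_iff_of_nonneg (norm_nonneg _) two_ne_zero).mp h

end Matrices

section NeuralCollapse

variable {d K n : ℕ} {W : Matrix (Fin d) (Fin K) ℝ} {H : Matrix (Fin d) (Fin K × Fin n) ℝ}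

lemma transpose_mul_self_eq_simplexETF_iff (hW : W ∈ OB d (Fin K)) (hK : (K : ℝ) - 1 ≠ 0) :
    Wᵀ * W = ((K : ℝ) - 1)⁻¹ •
        ((K : ℝ) • (1 : Matrix (Fin K) (Fin K) ℝ) - Matrix.of fun _ _ => (1 : ℝ))
      ↔ ∀ ℓ k, ℓ ≠ k → ∑ r, W r ℓ * W r k = -((K : ℝ) - 1)⁻¹ := by
  rw [← Matrix.ext_iff]
  simp only [Matrix.mul_apply, Matrix.transpose_apply, Matrix.smul_apply, Matrix.sub_apply,
    Matrix.one_apply, Matrix.of_apply, smul_eq_mul]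
  refine ⟨fun h ℓ k hℓk => by simpa [hℓk] using h ℓ k, fun h ℓ k => ?_⟩
  rcases eq_or_ne ℓ k with rfl | hℓk
  · simp only [if_true, mul_one, ← sq, hW ℓ]
    field_simp
  · simp [hℓk, h ℓ k hℓk]

lemma hbar_eq_of_forall_eq (hn : n ≠ 0) (hHW : ∀ k i r, H r (k, i) = W r k) : hbar H = W := by
  ext r k
  simp [hbar, hHW, hn]

theorem neuralCollapse_iff (hW : W ∈ OB d (Fin K)) (hK : (K : ℝ) - 1 ≠ 0) (hn : n ≠ 0) :
    NeuralCollapse W H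
      ↔ (∀ k i r, H r (k, i) = W r k) ∧ ∀ ℓ k, ℓ ≠ k → ∑ r, W r ℓ * W r k = -((K : ℝ) - 1)⁻¹ := by
  constructor
  · rintro ⟨hNC1, ⟨-, hGram⟩, hNC3⟩
    have hbarW : hbar H = W := (Matrix.ext hNC3).symm
    rw [hbarW] at hNC1 hGram
    exact ⟨hNC1, (transpose_mul_self_eq_simplexETF_iff hW hK).mp hGram⟩
  · rintro ⟨hHW, hGram⟩
    rw [NeuralCollapse, hbar_eq_of_forall_eq hn hHW]
    exact ⟨hHW, ⟨hW, (transpose_mul_self_eq_simplexETF_iff hW hK).mpr hGram⟩, fun _ _ => rfl⟩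

end NeuralCollapse

section Risk

variable {d K n : ℕ} {τ : ℝ} {W : Matrix (Fin d) (Fin K) ℝ}
  {H : Matrix (Fin d) (Fin K × Fin n) ℝ}

lemma ceRisk_eq_mean_sum_LCE (τ : ℝ) (W : Matrix (Fin d) (Fin K) ℝ)
    (H : Matrix (Fin d) (Fin K × Fin n) ℝ) :
    ceRisk τ W H = (1 / ((K : ℝ) * n)) *
      ∑ i, ∑ k, LCE (fun ℓ => τ * ⟪columnVec W ℓ, columnVec H (k, i)⟫) k := by
  simp only [ceRisk, inner_columnVec]
  rw [sum_comm]

theorem ceRisk_eq_ceLowerBound_iff (hK : 2 ≤ K) (hn : n ≠ 0) (hτ : 0 < τ)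
    (hW : W ∈ OB d (Fin K)) (hH : H ∈ OB d (Fin K × Fin n)) :
    ceRisk τ W H = ceLowerBound K τ
      ↔ ∀ i, ∑ k, LCE (fun ℓ => τ * ⟪columnVec W ℓ, columnVec H (k, i)⟫) k
        = K * ceLowerBound K τ := by
  have hKn : (K : ℝ) * n ≠ 0 := mul_ne_zero (by norm_cast; omega) (by exact_mod_cast hn)
  rw [ceRisk_eq_mean_sum_LCE, one_div_mul_eq_div, div_eq_iff hKn,
    show ceLowerBound K τ * (K * n) = ∑ _i : Fin n, K * ceLowerBound K τ by simp; ring,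
    eq_comm, sum_eq_sum_iff_of_le fun i _ => card_mul_ceLowerBound_le_sum_LCE hK hτ
      (norm_columnVec_of_mem_OB hW) fun k => norm_columnVec_of_mem_OB hH (k, i)]
  simp only [mem_univ, forall_const]
  exact forall_congr' fun _ => eq_comm

end Risk

theorem ceRisk_eq_lower_bound_iff_neural_collapse_general (d K n : ℕ) (hK : 2 ≤ K)
    (hn : 1 ≤ n) (τ : ℝ) (hτ : 0 < τ)
    (W : Matrix (Fin d) (Fin K) ℝ) (H : Matrix (Fin d) (Fin K × Fin n) ℝ)
    (hW : W ∈ OB d (Fin K)) (hH : H ∈ OB d (Fin K × Fin n)) :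
    ceRisk τ W H
        = Real.log (1 + ((K : ℝ) - 1) * Real.exp (-((K : ℝ) * τ) / ((K : ℝ) - 1)))
      ↔ NeuralCollapse W H := by
  have hK1 := (sub_one_pos_of_two_le hK).ne'
  have : Nonempty (Fin n) := ⟨⟨0, hn⟩⟩
  calc ceRisk τ W H = ceLowerBound K τ
      ↔ ∀ i, ∑ k, LCE (fun ℓ => τ * ⟪columnVec W ℓ, columnVec H (k, i)⟫) k
        = K * ceLowerBound K τ := ceRisk_eq_ceLowerBound_iff hK (by omega) hτ hW hH
    _ ↔ ∀ i, (fun k => columnVec H (k, i)) = columnVec W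
        ∧ ∀ ℓ k, ℓ ≠ k → ⟪columnVec W ℓ, columnVec W k⟫ = -((K : ℝ) - 1)⁻¹ :=
      forall_congr' fun i => sum_LCE_eq_card_mul_ceLowerBound_iff hK hτ
        (norm_columnVec_of_mem_OB hW) fun k => norm_columnVec_of_mem_OB hH (k, i)
    _ ↔ (∀ k i r, H r (k, i) = W r k) ∧ ∀ ℓ k, ℓ ≠ k → ∑ r, W r ℓ * W r k = -((K : ℝ) - 1)⁻¹ := by
      simp only [forall_and, forall_const, funext_iff, columnVec_eq_iff, inner_columnVec]
      rw [forall_comm]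
    _ ↔ NeuralCollapse W H := (neuralCollapse_iff hW hK1 (by omega)).symm

theorem ceRisk_eq_lower_bound_iff_neural_collapse (d K n : ℕ) (hK : 2 ≤ K) (hdK : K ≤ d)
    (hn : 1 ≤ n) (τ : ℝ) (hτ : 0 < τ)
    (W : Matrix (Fin d) (Fin K) ℝ) (H : Matrix (Fin d) (Fin K × Fin n) ℝ)
    (hW : W ∈ OB d (Fin K)) (hH : H ∈ OB d (Fin K × Fin n)) :
    ceRisk τ W H
        = Real.log (1 + ((K : ℝ) - 1) * Real.exp (-((K : ℝ) * τ) / ((K : ℝ) - 1)))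
      ↔ NeuralCollapse W H :=
  ceRisk_eq_lower_bound_iff_neural_collapse_general d K n hK hn τ hτ W H hW hH
end

section
/- Let K ≥ 2, n ≥ 1, N = Kn, d ≥ 1, τ > 0. Suppose (W*, Q*) minimizes f̄ over OB(d,K) × OB(d,K). Define H* ∈ ℝ^{d×N} by setting its column indexed by (k,i) equal to the k-th column of Q* for every k ∈ {1,…,K} and i ∈ {1,…,n}. Then (W*, H*) minimizes f over OB(d,K) × OB(d,N). -/
open scoped BigOperators Matrix

/-- The reduced risk `f̄(W,Q) = (1/K) ∑_k L_CE(τ Wᵀ q_k, k)`. -/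
noncomputable def fbar {d K : ℕ} (τ : ℝ) (W Q : Matrix (Fin d) (Fin K) ℝ) : ℝ :=
  (1 / (K : ℝ)) * ∑ k : Fin K, LCE (fun ℓ => τ * ∑ r, W r ℓ * Q r k) k

/-! The risk `f` splits over samples: `f(W, H) = (1/n) ∑ᵢ f̄(W, Hᵢ)`, where `Hᵢ` collects the
features of sample `i` of every class and is itself a point of `OB(d, K)`. Hence `f(W, H)` is an
average of values of `f̄` on the feasible set, each at least `f̄(W*, Q*)`, while for `H*` every
`Hᵢ` equals `Q*`. -/

theorem mem_OB_submatrix {p : ℕ} {ι κ : Type} [Fintype ι] [Fintype κ]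
    {M : Matrix (Fin p) ι ℝ} (hM : M ∈ OB p ι) (e : κ → ι) :
    M.submatrix id e ∈ OB p κ :=
  fun j => hM (e j)

theorem ceRisk_eq_average_fbar {d K n : ℕ} (τ : ℝ) (W : Matrix (Fin d) (Fin K) ℝ)
    (H : Matrix (Fin d) (Fin K × Fin n) ℝ) :
    ceRisk τ W H = (1 / (n : ℝ)) * ∑ i, fbar τ W (H.submatrix id (·, i)) := by
  unfold ceRisk fbar
  rw [Finset.sum_comm, Finset.mul_sum, Finset.mul_sum]
  refine Finset.sum_congr rfl fun i _ => ?_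
  simp only [Matrix.submatrix_apply, id]
  ring

theorem min_fbar_gives_min_ceRisk_general (d K n : ℕ)
    (τ : ℝ)
    (Wstar Qstar : Matrix (Fin d) (Fin K) ℝ)
    (hmin : ∀ W' Q' : Matrix (Fin d) (Fin K) ℝ, W' ∈ OB d (Fin K) → Q' ∈ OB d (Fin K) →
      fbar τ Wstar Qstar ≤ fbar τ W' Q')
    (Hstar : Matrix (Fin d) (Fin K × Fin n) ℝ)
    (hHstar : ∀ r k i, Hstar r (k, i) = Qstar r k) :
    ∀ (W' : Matrix (Fin d) (Fin K) ℝ) (H' : Matrix (Fin d) (Fin K × Fin n) ℝ),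
      W' ∈ OB d (Fin K) → H' ∈ OB d (Fin K × Fin n) →
      ceRisk τ Wstar Hstar ≤ ceRisk τ W' H' := by
  intro W' H' hW' hH'
  have hslice : ∀ i, Hstar.submatrix id (·, i) = Qstar := fun i => by
    ext r k
    exact hHstar r k i
  rw [ceRisk_eq_average_fbar, ceRisk_eq_average_fbar]
  gcongr with i
  rw [hslice i]
  exact hmin W' _ hW' (mem_OB_submatrix hH' _)

theorem min_fbar_gives_min_ceRisk (d K n : ℕ) (hK : 2 ≤ K) (hn : 1 ≤ n) (hd : 1 ≤ d)
    (τ : ℝ) (hτ : 0 < τ)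
    (Wstar Qstar : Matrix (Fin d) (Fin K) ℝ)
    (hWstar : Wstar ∈ OB d (Fin K)) (hQstar : Qstar ∈ OB d (Fin K))
    (hmin : ∀ W' Q' : Matrix (Fin d) (Fin K) ℝ, W' ∈ OB d (Fin K) → Q' ∈ OB d (Fin K) →
      fbar τ Wstar Qstar ≤ fbar τ W' Q')
    (Hstar : Matrix (Fin d) (Fin K × Fin n) ℝ)
    (hHstar : ∀ r k i, Hstar r (k, i) = Qstar r k) :
    ∀ (W' : Matrix (Fin d) (Fin K) ℝ) (H' : Matrix (Fin d) (Fin K × Fin n) ℝ),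
      W' ∈ OB d (Fin K) → H' ∈ OB d (Fin K × Fin n) →
      ceRisk τ Wstar Hstar ≤ ceRisk τ W' H' :=
  min_fbar_gives_min_ceRisk_general d K n τ Wstar Qstar hmin Hstar hHstar
end

section
/- Let d ≥ K ≥ 2 and τ > 0. Then every global minimizer (W,Q) of f̄ over OB(d,K) × OB(d,K) satisfies Q = W and QᵀQ = (K/(K−1))·(I_K − (1/K)·1_K 1_Kᵀ). -/
open scoped BigOperators Matrix

/-!
Each `LCE · k` is convex, so it lies above its tangent plane at the one-hot logits `β e_k`, where
`β = τ K / (K - 1)` is the logit gap of the simplex ETF. Averaging these tangent planes over `k`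
gives the value of `f̄` at the simplex ETF plus a positive multiple of
`K² - (K tr (Wᵀ Q) - ⟪∑ w_k, ∑ q_k⟫)`, which is nonnegative for unit columns (Cauchy–Schwarz)
and vanishes only if `Q = W` and `∑ w_k = 0`. As `K ≤ d`, the ETF fits in `ℝ^d`, so at a global
minimiser all these inequalities are tight: `Q = W`, and by the equality case of Jensen's
inequality for `exp` each column of `τ WᵀW` is a constant shift of `β e_k`; the unit diagonal
then forces `WᵀW` to be the ETF Gram matrix.
-/
open Real Finset Matrix

section LogSumExp

variable {ι : Type*} [Fintype ι]

theorem sum_mul_exp_pos {w : ι → ℝ} (hw : ∀ i, 0 < w i) (hw₁ : ∑ i, w i = 1) (u : ι → ℝ) :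
    0 < ∑ i, w i * exp (u i) := by
  refine sum_pos (fun i _ => mul_pos (hw i) (exp_pos _)) (univ_nonempty_iff.2 ?_)
  by_contra h
  simp [not_nonempty_iff.1 h] at hw₁

theorem sum_mul_le_log_sum_mul_exp {w : ι → ℝ} (hw : ∀ i, 0 < w i) (hw₁ : ∑ i, w i = 1)
    (u : ι → ℝ) : ∑ i, w i * u i ≤ log (∑ i, w i * exp (u i)) := by
  rw [le_log_iff_exp_le (sum_mul_exp_pos hw hw₁ u)]
  simpa only [smul_eq_mul] using
    convexOn_exp.map_sum_le (fun i _ => (hw i).le) hw₁ (fun i _ => Set.mem_univ (u i))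

theorem sum_mul_eq_log_sum_mul_exp_iff {w : ι → ℝ} (hw : ∀ i, 0 < w i) (hw₁ : ∑ i, w i = 1)
    (u : ι → ℝ) : ∑ i, w i * u i = log (∑ i, w i * exp (u i)) ↔ ∀ i j, u i = u j := by
  rw [← exp_eq_exp, exp_log (sum_mul_exp_pos hw hw₁ u)]
  simpa only [smul_eq_mul, mem_univ, forall_const] using
    strictConvexOn_exp.map_sum_eq_iff_of_pos (fun i _ => hw i) hw₁ (fun i _ => Set.mem_univ (u i))

end LogSumExp

section Softmax

variable {ι : Type*} [Fintype ι] [Nonempty ι]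

noncomputable def softmax (y : ι → ℝ) (i : ι) : ℝ := exp (y i) / ∑ j, exp (y j)

theorem sum_exp_pos (y : ι → ℝ) : 0 < ∑ i, exp (y i) :=
  sum_pos (fun _ _ => exp_pos _) univ_nonempty

theorem softmax_pos (y : ι → ℝ) (i : ι) : 0 < softmax y i :=
  div_pos (exp_pos _) (sum_exp_pos y)

theorem sum_softmax (y : ι → ℝ) : ∑ i, softmax y i = 1 := by
  simp only [softmax, ← sum_div, div_self (sum_exp_pos y).ne']

theorem log_sum_exp_eq_add_log_sum_softmax_mul_exp (y z : ι → ℝ) :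
    log (∑ i, exp (z i)) =
      log (∑ i, exp (y i)) + log (∑ i, softmax y i * exp (z i - y i)) := by
  rw [← log_mul (sum_exp_pos y).ne' (sum_mul_exp_pos (softmax_pos y) (sum_softmax y) _).ne',
    mul_sum]
  refine congrArg log (sum_congr rfl fun i _ => ?_)
  rw [softmax, exp_sub]
  field_simp [(sum_exp_pos y).ne']

/-- The tangent-plane inequality: `softmax y` is the gradient of `log ∑ exp` at `y`. -/
theorem log_sum_exp_add_sum_softmax_mul_le (y z : ι → ℝ) :
    log (∑ i, exp (y i)) + ∑ i, softmax y i * (z i - y i) ≤ log (∑ i, exp (z i)) := by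
  rw [log_sum_exp_eq_add_log_sum_softmax_mul_exp y z]
  exact (add_le_add_iff_left _).2 (sum_mul_le_log_sum_mul_exp (softmax_pos y) (sum_softmax y) _)

theorem log_sum_exp_add_sum_softmax_mul_eq_iff (y z : ι → ℝ) :
    log (∑ i, exp (y i)) + ∑ i, softmax y i * (z i - y i) = log (∑ i, exp (z i)) ↔
      ∃ c, ∀ i, z i = c + y i := by
  rw [log_sum_exp_eq_add_log_sum_softmax_mul_exp y z, add_right_inj,
    sum_mul_eq_log_sum_mul_exp_iff (softmax_pos y) (sum_softmax y)]
  constructor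
  · intro h
    obtain ⟨j⟩ := ‹Nonempty ι›
    exact ⟨z j - y j, fun i => by linarith [h i j]⟩
  · rintro ⟨c, hc⟩ i j
    rw [hc i, hc j]
    ring

end Softmax

section OneHot

variable {K : ℕ} (k : Fin K)

theorem sum_ite_eq_add_mul (a b : ℝ) :
    ∑ ℓ : Fin K, (if ℓ = k then a else b) = a + (K - 1) * b := by
  have h : ∀ ℓ : Fin K, (if ℓ = k then a else b) = b + if ℓ = k then a - b else 0 := by
    intro ℓ; split_ifs <;> ring
  simp only [h, sum_add_distrib, sum_ite_eq', mem_univ, if_true, sum_const, card_univ,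
    Fintype.card_fin, nsmul_eq_mul]
  ring

theorem exp_add_cast_sub_one_pos (hK : 1 ≤ K) (x : ℝ) : 0 < exp x + ((K : ℝ) - 1) := by
  have : (1 : ℝ) ≤ K := by exact_mod_cast hK
  linarith [exp_pos x]

variable (β : ℝ)

/-- The tangent plane of `LCE · k` at the one-hot logits `fun ℓ => if ℓ = k then β else 0`. -/
noncomputable def lceTangent (z : Fin K → ℝ) : ℝ :=
  log (exp β + (K - 1)) + (∑ ℓ, z ℓ - K * z k - β * exp β) / (exp β + (K - 1))

theorem lceTangent_eq_log_sum_exp_add_sum_softmax_mul (z : Fin K → ℝ) :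
    lceTangent k β z = log (∑ ℓ, exp (if ℓ = k then β else 0)) +
      ∑ ℓ, softmax (fun m => if m = k then β else 0) ℓ * (z ℓ - if ℓ = k then β else 0) - z k := by
  have : Nonempty (Fin K) := ⟨k⟩
  have hsum : ∑ ℓ, exp (if ℓ = k then β else 0) = exp β + (K - 1) := by
    simp only [apply_ite exp, exp_zero, sum_ite_eq_add_mul, mul_one]
  have hS := exp_add_cast_sub_one_pos k.pos β
  have hterm : ∀ ℓ, softmax (fun m => if m = k then β else 0) ℓ * (z ℓ - if ℓ = k then β else 0) =
      (z ℓ + if ℓ = k then (exp β - 1) * z k - β * exp β else 0) / (exp β + (K - 1)) := by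
    intro ℓ
    rw [softmax, hsum]
    by_cases hℓ : ℓ = k
    · subst hℓ; simp only [if_true]; ring
    · simp [hℓ, div_eq_inv_mul]
  simp only [lceTangent, hsum, hterm, ← sum_div, sum_add_distrib, sum_ite_eq', mem_univ, if_true]
  field_simp
  ring

theorem lceTangent_le_LCE (z : Fin K → ℝ) : lceTangent k β z ≤ LCE z k := by
  have : Nonempty (Fin K) := ⟨k⟩
  rw [lceTangent_eq_log_sum_exp_add_sum_softmax_mul, LCE]
  linarith [log_sum_exp_add_sum_softmax_mul_le (fun m => if m = k then β else 0) z]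

theorem lceTangent_eq_LCE_iff (z : Fin K → ℝ) :
    lceTangent k β z = LCE z k ↔ ∃ c, ∀ ℓ, z ℓ = c + if ℓ = k then β else 0 := by
  have : Nonempty (Fin K) := ⟨k⟩
  rw [lceTangent_eq_log_sum_exp_add_sum_softmax_mul, LCE, sub_left_inj,
    log_sum_exp_add_sum_softmax_mul_eq_iff]

end OneHot

section CenteredInner

variable {E : Type*} [NormedAddCommGroup E] {ι : Type*} [Fintype ι]

theorem norm_sum_sq_le_card_mul_sum_norm_sq (v : ι → E) :
    ‖∑ i, v i‖ ^ 2 ≤ Fintype.card ι * ∑ i, ‖v i‖ ^ 2 :=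
  (pow_le_pow_left₀ (norm_nonneg _) (norm_sum_le _ _) 2).trans (sq_sum_le_card_mul_sum_sq ..)

variable [InnerProductSpace ℝ E] {w q : ι → E}

theorem two_mul_sq_card_sub_eq (hw : ∀ i, ‖w i‖ = 1) (hq : ∀ i, ‖q i‖ = 1) :
    2 * ((Fintype.card ι : ℝ) ^ 2 -
        (Fintype.card ι * ∑ i, inner ℝ (w i) (q i) - inner ℝ (∑ i, w i) (∑ i, q i))) =
      (Fintype.card ι * ∑ i, ‖w i - q i‖ ^ 2 - ‖∑ i, (w i - q i)‖ ^ 2) +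
        ‖∑ i, w i‖ ^ 2 + ‖∑ i, q i‖ ^ 2 := by
  have hdiff : ∑ i, ‖w i - q i‖ ^ 2 = 2 * Fintype.card ι - 2 * ∑ i, inner ℝ (w i) (q i) := by
    simp only [norm_sub_sq_real, hw, hq, sum_add_distrib, sum_sub_distrib, ← mul_sum, sum_const,
      card_univ, nsmul_eq_mul]
    ring
  rw [hdiff, sum_sub_distrib, norm_sub_sq_real]
  ring

theorem card_mul_sum_inner_sub_inner_sum_le (hw : ∀ i, ‖w i‖ = 1) (hq : ∀ i, ‖q i‖ = 1) :
    Fintype.card ι * ∑ i, inner ℝ (w i) (q i) - inner ℝ (∑ i, w i) (∑ i, q i) ≤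
      (Fintype.card ι : ℝ) ^ 2 := by
  have := two_mul_sq_card_sub_eq hw hq
  nlinarith [norm_sum_sq_le_card_mul_sum_norm_sq (fun i => w i - q i), sq_nonneg ‖∑ i, w i‖,
    sq_nonneg ‖∑ i, q i‖]

theorem eq_of_card_mul_sum_inner_sub_inner_sum_eq (hw : ∀ i, ‖w i‖ = 1) (hq : ∀ i, ‖q i‖ = 1)
    (h : Fintype.card ι * ∑ i, inner ℝ (w i) (q i) - inner ℝ (∑ i, w i) (∑ i, q i) =
      (Fintype.card ι : ℝ) ^ 2) :
    w = q := by
  have hid := two_mul_sq_card_sub_eq hw hq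
  have hCS := norm_sum_sq_le_card_mul_sum_norm_sq (fun i => w i - q i)
  rw [h, sub_self, mul_zero] at hid
  have hS : ∑ i, w i = 0 := by
    rw [← norm_eq_zero, ← pow_eq_zero_iff two_ne_zero]
    nlinarith [sq_nonneg ‖∑ i, w i‖, sq_nonneg ‖∑ i, q i‖]
  have hT : ∑ i, q i = 0 := by
    rw [← norm_eq_zero, ← pow_eq_zero_iff two_ne_zero]
    nlinarith [sq_nonneg ‖∑ i, w i‖, sq_nonneg ‖∑ i, q i‖]
  rw [sum_sub_distrib, hS, hT, sub_zero, norm_zero, zero_pow two_ne_zero, sub_zero, add_zero,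
    add_zero, eq_comm, mul_eq_zero, sum_eq_zero_iff_of_nonneg (fun j _ => sq_nonneg _)] at hid
  funext i
  have hcard : (Fintype.card ι : ℝ) ≠ 0 := by
    exact_mod_cast (Fintype.card_pos_iff.2 ⟨i⟩).ne'
  rw [← sub_eq_zero, ← norm_eq_zero, ← pow_eq_zero_iff two_ne_zero]
  exact (hid.resolve_left hcard) i (mem_univ i)

end CenteredInner

section Columns

variable {p : ℕ}

theorem mem_OB_iff {ι : Type} [Fintype ι] {M : Matrix (Fin p) ι ℝ} :
    M ∈ OB p ι ↔ ∀ j, (Mᵀ * M) j j = 1 := by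
  simp only [OB, Set.mem_ofPred_eq, mul_apply, transpose_apply, sq]

theorem inner_toLp_transpose {ι : Type*} (W Q : Matrix (Fin p) ι ℝ) (i j : ι) :
    inner ℝ (WithLp.toLp 2 (Wᵀ i)) (WithLp.toLp 2 (Qᵀ j)) = (Wᵀ * Q) i j := by
  simp only [EuclideanSpace.inner_toLp_toLp, dotProduct, mul_apply, transpose_apply, star_trivial,
    mul_comm]

theorem norm_toLp_transpose {ι : Type} [Fintype ι] {M : Matrix (Fin p) ι ℝ} (hM : M ∈ OB p ι)
    (j : ι) : ‖WithLp.toLp 2 (Mᵀ j)‖ = 1 := by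
  rw [← pow_eq_one_iff_of_nonneg (norm_nonneg _) two_ne_zero, ← real_inner_self_eq_norm_sq,
    inner_toLp_transpose, mem_OB_iff.1 hM]

variable {ι : Type} [Fintype ι] {W Q : Matrix (Fin p) ι ℝ}

theorem card_mul_trace_sub_sum_le (hW : W ∈ OB p ι) (hQ : Q ∈ OB p ι) :
    Fintype.card ι * trace (Wᵀ * Q) - ∑ i, ∑ j, (Wᵀ * Q) i j ≤ (Fintype.card ι : ℝ) ^ 2 := by
  simpa only [trace, Matrix.diag, ← inner_toLp_transpose, ← sum_inner, ← inner_sum] using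
    card_mul_sum_inner_sub_inner_sum_le (norm_toLp_transpose hW) (norm_toLp_transpose hQ)

theorem eq_of_card_mul_trace_sub_sum_eq (hW : W ∈ OB p ι) (hQ : Q ∈ OB p ι)
    (h : Fintype.card ι * trace (Wᵀ * Q) - ∑ i, ∑ j, (Wᵀ * Q) i j = (Fintype.card ι : ℝ) ^ 2) :
    Q = W := by
  simp only [trace, Matrix.diag, ← inner_toLp_transpose, ← sum_inner, ← inner_sum] at h
  have hcols := eq_of_card_mul_sum_inner_sub_inner_sum_eq (norm_toLp_transpose hW)
    (norm_toLp_transpose hQ) h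
  ext r j
  exact congrFun (congrArg WithLp.ofLp (congrFun hcols j)) r |>.symm

end Columns

theorem exists_transpose_mul_self_eq {K d : ℕ} {ι : Type*} [Fintype ι] (hKd : K ≤ d)
    (C : Matrix (Fin K) ι ℝ) : ∃ M : Matrix (Fin d) ι ℝ, Mᵀ * M = Cᵀ * C := by
  set P : Matrix (Fin d) (Fin K) ℝ := (1 : Matrix (Fin d) (Fin d) ℝ).submatrix id (Fin.castLE hKd)
  have hP : Pᵀ * P = 1 := by
    rw [transpose_submatrix, transpose_one, ← submatrix_mul _ _ _ _ _ Function.bijective_id,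
      Matrix.mul_one, submatrix_one _ (Fin.castLE_injective hKd)]
  exact ⟨P * C, by rw [transpose_mul, Matrix.mul_assoc, ← Matrix.mul_assoc Pᵀ, hP, Matrix.one_mul]⟩

section SimplexETF

variable {K : ℕ}

noncomputable def meanLCE (τ : ℝ) (A : Matrix (Fin K) (Fin K) ℝ) : ℝ :=
  (1 / (K : ℝ)) * ∑ k, LCE (fun ℓ => τ * A ℓ k) k

theorem fbar_eq_meanLCE {d : ℕ} (τ : ℝ) (W Q : Matrix (Fin d) (Fin K) ℝ) :
    fbar τ W Q = meanLCE τ (Wᵀ * Q) := rfl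

/-- The logit gap `τ (G k k - G ℓ k)`, `ℓ ≠ k`, of the simplex ETF `G = etfGram K`. -/
noncomputable def etfMargin (K : ℕ) (τ : ℝ) : ℝ := τ * K / (K - 1)

noncomputable def etfRisk (K : ℕ) (τ : ℝ) : ℝ :=
  log (exp (etfMargin K τ) + (K - 1)) - etfMargin K τ

noncomputable def etfGram (K : ℕ) : Matrix (Fin K) (Fin K) ℝ :=
  ((K : ℝ) / ((K : ℝ) - 1)) • ((1 : Matrix (Fin K) (Fin K) ℝ) - ((K : ℝ))⁻¹ • of fun _ _ => 1)

theorem meanLCE_sub_etfRisk (hK : 2 ≤ K) (τ : ℝ) (A : Matrix (Fin K) (Fin K) ℝ) :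
    meanLCE τ A - etfRisk K τ =
      (1 / (K : ℝ)) * ∑ k, (LCE (fun ℓ => τ * A ℓ k) k -
        lceTangent k (etfMargin K τ) (fun ℓ => τ * A ℓ k)) +
      τ * (K ^ 2 - (K * trace A - ∑ ℓ, ∑ k, A ℓ k)) /
        (K * (exp (etfMargin K τ) + (K - 1))) := by
  have hK' : (2 : ℝ) ≤ K := by exact_mod_cast hK
  have hS := exp_add_cast_sub_one_pos (K := K) (by omega) (etfMargin K τ)
  simp only [meanLCE, etfRisk, sum_sub_distrib, lceTangent, sum_add_distrib, ← sum_div, ← mul_sum,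
    sum_const, card_univ, Fintype.card_fin, nsmul_eq_mul, trace, Matrix.diag]
  rw [sum_comm (f := fun ℓ k => A ℓ k)]
  have hK1 : (K : ℝ) - 1 ≠ 0 := by linarith
  generalize exp (etfMargin K τ) = E at hS ⊢
  simp only [etfMargin]
  field_simp
  ring

theorem etfRisk_le_meanLCE (hK : 2 ≤ K) {τ : ℝ} (hτ : 0 ≤ τ) {A : Matrix (Fin K) (Fin K) ℝ}
    (hA : K * trace A - ∑ ℓ, ∑ k, A ℓ k ≤ (K : ℝ) ^ 2) : etfRisk K τ ≤ meanLCE τ A := by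
  have hS := exp_add_cast_sub_one_pos (K := K) (by omega) (etfMargin K τ)
  rw [← sub_nonneg, meanLCE_sub_etfRisk hK]
  refine add_nonneg (mul_nonneg (by positivity) (sum_nonneg fun k _ => ?_))
    (div_nonneg (mul_nonneg hτ (sub_nonneg.2 hA)) (by positivity))
  exact sub_nonneg.2 (lceTangent_le_LCE k _ _)

theorem meanLCE_eq_etfRisk_iff (hK : 2 ≤ K) {τ : ℝ} (hτ : 0 < τ) {A : Matrix (Fin K) (Fin K) ℝ}
    (hA : K * trace A - ∑ ℓ, ∑ k, A ℓ k ≤ (K : ℝ) ^ 2) :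
    meanLCE τ A = etfRisk K τ ↔ K * trace A - ∑ ℓ, ∑ k, A ℓ k = (K : ℝ) ^ 2 ∧
      ∀ k, ∃ c, ∀ ℓ, τ * A ℓ k = c + if ℓ = k then etfMargin K τ else 0 := by
  have hS := exp_add_cast_sub_one_pos (K := K) (by omega) (etfMargin K τ)
  have hK0 : (0 : ℝ) < K := by exact_mod_cast (by omega : 0 < K)
  have hgap : 0 ≤ τ * (K ^ 2 - (K * trace A - ∑ ℓ, ∑ k, A ℓ k)) /
      (K * (exp (etfMargin K τ) + (K - 1))) :=
    div_nonneg (mul_nonneg hτ.le (sub_nonneg.2 hA)) (by positivity)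
  have hterms : ∀ k ∈ univ, 0 ≤ LCE (fun ℓ => τ * A ℓ k) k -
      lceTangent k (etfMargin K τ) (fun ℓ => τ * A ℓ k) :=
    fun k _ => sub_nonneg.2 (lceTangent_le_LCE k _ _)
  rw [← sub_eq_zero, meanLCE_sub_etfRisk hK,
    add_eq_zero_iff_of_nonneg (mul_nonneg (by positivity) (sum_nonneg hterms)) hgap, and_comm]
  refine and_congr ?_ ?_
  · rw [div_eq_zero_iff, mul_eq_zero, sub_eq_zero, eq_comm (a := (K : ℝ) ^ 2)]
    simp only [hτ.ne', false_or, mul_eq_zero, hK0.ne', hS.ne', or_false]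
  · rw [mul_eq_zero, sum_eq_zero_iff_of_nonneg hterms]
    simp only [one_div, inv_eq_zero, hK0.ne', false_or, mem_univ, forall_const, sub_eq_zero,
      eq_comm (a := LCE _ _), lceTangent_eq_LCE_iff]

theorem mul_etfGram_apply (hK : 2 ≤ K) (τ : ℝ) (ℓ k : Fin K) :
    τ * etfGram K ℓ k = -(τ / (K - 1)) + if ℓ = k then etfMargin K τ else 0 := by
  have hK' : (2 : ℝ) ≤ K := by exact_mod_cast hK
  have hK1 : (K : ℝ) - 1 ≠ 0 := by linarith
  simp only [etfGram, etfMargin, Matrix.smul_apply, Matrix.sub_apply, one_apply, of_apply,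
    smul_eq_mul, mul_one]
  split_ifs <;> field_simp <;> ring

theorem etfGram_apply_self (hK : 2 ≤ K) (k : Fin K) : etfGram K k k = 1 := by
  have hK' : (2 : ℝ) ≤ K := by exact_mod_cast hK
  have hK1 : (K : ℝ) - 1 ≠ 0 := by linarith
  have h := mul_etfGram_apply hK 1 k k
  simp only [one_mul, if_true, etfMargin] at h
  rw [h]
  field_simp
  ring

theorem sum_sum_etfGram (hK : 2 ≤ K) : ∑ ℓ, ∑ k, etfGram K ℓ k = 0 := by
  have hK' : (2 : ℝ) ≤ K := by exact_mod_cast hK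
  have h := fun ℓ k => mul_etfGram_apply hK 1 ℓ k
  simp only [one_mul] at h
  simp only [h, sum_add_distrib, sum_ite_eq, mem_univ, if_true, sum_const, card_univ,
    Fintype.card_fin, nsmul_eq_mul, etfMargin]
  field_simp
  ring

theorem etfGram_eq_transpose_mul_self (hK : 2 ≤ K) :
    etfGram K = (√((K : ℝ) / (K - 1)) • (1 - (K : ℝ)⁻¹ • of fun _ _ => (1 : ℝ)))ᵀ *
      (√((K : ℝ) / (K - 1)) • (1 - (K : ℝ)⁻¹ • of fun _ _ => (1 : ℝ))) := by
  have hK' : (2 : ℝ) ≤ K := by exact_mod_cast hK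
  have hJ : (of fun _ _ => (1 : ℝ) : Matrix (Fin K) (Fin K) ℝ) * (of fun _ _ => 1) =
      (K : ℝ) • of fun _ _ => 1 := by
    ext i j; simp [mul_apply]
  have hJt : (of fun _ _ => (1 : ℝ) : Matrix (Fin K) (Fin K) ℝ)ᵀ = of fun _ _ => 1 := rfl
  rw [transpose_smul, transpose_sub, transpose_one, transpose_smul, hJt, smul_mul_smul_comm,
    ← sq, sq_sqrt (div_nonneg (by positivity) (by linarith)), etfGram]
  congr 1
  rw [sub_mul, mul_sub, mul_sub, Matrix.one_mul, Matrix.mul_one, Matrix.one_mul, smul_mul_smul_comm,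
    hJ, smul_smul]
  have hK0 : (K : ℝ)⁻¹ * (K : ℝ)⁻¹ * K = (K : ℝ)⁻¹ := by field_simp
  rw [hK0, sub_self, sub_zero]

theorem meanLCE_etfGram (hK : 2 ≤ K) {τ : ℝ} (hτ : 0 < τ) :
    meanLCE τ (etfGram K) = etfRisk K τ := by
  have htrace : K * trace (etfGram K) - ∑ ℓ, ∑ k, etfGram K ℓ k = (K : ℝ) ^ 2 := by
    simp only [trace, Matrix.diag, etfGram_apply_self hK, sum_const, card_univ, Fintype.card_fin,
      nsmul_eq_mul, mul_one, sum_sum_etfGram hK, sub_zero, sq]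
  exact (meanLCE_eq_etfRisk_iff hK hτ htrace.le).2
    ⟨htrace, fun k => ⟨-(τ / (K - 1)), fun ℓ => mul_etfGram_apply hK τ ℓ k⟩⟩

theorem eq_etfGram_of_diag_eq_one_of_cols (hK : 2 ≤ K) {τ : ℝ} (hτ : τ ≠ 0)
    {A : Matrix (Fin K) (Fin K) ℝ} (hdiag : ∀ k, A k k = 1)
    (hcol : ∀ k, ∃ c, ∀ ℓ, τ * A ℓ k = c + if ℓ = k then etfMargin K τ else 0) :
    A = etfGram K := by
  ext ℓ k
  obtain ⟨c, hc⟩ := hcol k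
  have hck : c = -(τ / (K - 1)) := by
    have hG := mul_etfGram_apply hK τ k k
    have hA := hc k
    rw [etfGram_apply_self hK, if_pos rfl] at hG
    rw [hdiag, if_pos rfl] at hA
    linarith
  exact mul_left_cancel₀ hτ (by rw [hc, hck, mul_etfGram_apply hK])

end SimplexETF

section Fbar

variable {d K : ℕ}

theorem exists_mem_OB_transpose_mul_self_eq_etfGram (hK : 2 ≤ K) (hKd : K ≤ d) :
    ∃ M ∈ OB d (Fin K), Mᵀ * M = etfGram K := by
  obtain ⟨M, hM⟩ := exists_transpose_mul_self_eq hKd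
    (√((K : ℝ) / (K - 1)) • (1 - (K : ℝ)⁻¹ • of fun _ _ => 1 : Matrix (Fin K) (Fin K) ℝ))
  rw [← etfGram_eq_transpose_mul_self hK] at hM
  exact ⟨M, mem_OB_iff.2 fun j => by rw [hM, etfGram_apply_self hK], hM⟩

theorem etfRisk_le_fbar (hK : 2 ≤ K) {τ : ℝ} (hτ : 0 ≤ τ) {W Q : Matrix (Fin d) (Fin K) ℝ}
    (hW : W ∈ OB d (Fin K)) (hQ : Q ∈ OB d (Fin K)) : etfRisk K τ ≤ fbar τ W Q := by
  rw [fbar_eq_meanLCE]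
  exact etfRisk_le_meanLCE hK hτ
    (by simpa only [Fintype.card_fin] using card_mul_trace_sub_sum_le hW hQ)

theorem eq_etfGram_of_fbar_eq_etfRisk (hK : 2 ≤ K) {τ : ℝ} (hτ : 0 < τ)
    {W Q : Matrix (Fin d) (Fin K) ℝ} (hW : W ∈ OB d (Fin K)) (hQ : Q ∈ OB d (Fin K))
    (h : fbar τ W Q = etfRisk K τ) : Q = W ∧ Qᵀ * Q = etfGram K := by
  have htrace := card_mul_trace_sub_sum_le hW hQ
  simp only [Fintype.card_fin] at htrace
  obtain ⟨hcard, hcols⟩ := (meanLCE_eq_etfRisk_iff hK hτ htrace).1 h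
  have hQW : Q = W := eq_of_card_mul_trace_sub_sum_eq hW hQ (by simpa using hcard)
  subst hQW
  exact ⟨rfl, eq_etfGram_of_diag_eq_one_of_cols hK hτ.ne' (mem_OB_iff.1 hQ) hcols⟩

end Fbar

theorem fbar_global_min_structure (d K : ℕ) (hK : 2 ≤ K) (hdK : K ≤ d)
    (τ : ℝ) (hτ : 0 < τ)
    (W Q : Matrix (Fin d) (Fin K) ℝ)
    (hW : W ∈ OB d (Fin K)) (hQ : Q ∈ OB d (Fin K))
    (hmin : ∀ W' Q' : Matrix (Fin d) (Fin K) ℝ, W' ∈ OB d (Fin K) → Q' ∈ OB d (Fin K) →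
      fbar τ W Q ≤ fbar τ W' Q') :
    Q = W ∧
    Qᵀ * Q = ((K : ℝ) / ((K : ℝ) - 1)) •
      ((1 : Matrix (Fin K) (Fin K) ℝ) - ((K : ℝ))⁻¹ • Matrix.of fun _ _ => (1 : ℝ)) := by
  obtain ⟨M, hM, hMG⟩ := exists_mem_OB_transpose_mul_self_eq_etfGram hK hdK
  have hle : fbar τ W Q ≤ etfRisk K τ := by
    simpa only [fbar_eq_meanLCE τ M M, hMG, meanLCE_etfGram hK hτ] using hmin M M hM hM
  exact eq_etfGram_of_fbar_eq_etfRisk hK hτ hW hQ (hle.antisymm (etfRisk_le_fbar hK hτ.le hW hQ))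
end

section
/- Let d, N, K be positive integers, let H ∈ OB(d,N), let w ∈ ℝ^d be a unit vector, and suppose 0 < τ < 2(d−2)/(1 + (K mod 2)/K). Then there exists a unit vector a ∈ ℝ^d such that ⟨a, w⟩ = 0 and ‖Hᵀ a‖₂² < 2N / (τ·(1 + (K mod 2)/K) + 2). -/
/-!
Let `U = w^⊥`, of dimension at least `d - 1`, and let `v₁, …, v_m` be an orthonormal basis
of `U`. For the columns `hⱼ` of `H`, Bessel's inequality gives
`∑ᵢ ‖Hᵀ vᵢ‖² = ∑ⱼ ∑ᵢ ⟨vᵢ, hⱼ⟩² ≤ ∑ⱼ ‖hⱼ‖² = N`, so some `vᵢ` has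
`‖Hᵀ vᵢ‖² ≤ N / m ≤ N / (d - 1)`, and the bound on `τ` amounts to
`N / (d - 1) < 2N / (τ c + 2)`, where `c = 1 + (K mod 2) / K > 0`.
-/

open scoped BigOperators Matrix

open Module Finset

section InnerProductSpace

variable {E : Type*} [NormedAddCommGroup E] [InnerProductSpace ℝ E]

theorem Submodule.exists_mem_norm_eq_one_finrank_mul_sum_inner_sq_le (U : Submodule ℝ E)
    [FiniteDimensional ℝ U] (hU : 0 < finrank ℝ U) {ι : Type*} [Fintype ι] (h : ι → E) :
    ∃ u ∈ U, ‖u‖ = 1 ∧ finrank ℝ U * ∑ j, inner ℝ u (h j) ^ 2 ≤ ∑ j, ‖h j‖ ^ 2 := by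
  set b := stdOrthonormalBasis ℝ U
  have hb : Orthonormal ℝ fun i => (b i : E) := b.orthonormal.comp_linearIsometry U.subtypeₗᵢ
  have bessel : ∑ i, ∑ j, inner ℝ (b i : E) (h j) ^ 2 ≤ ∑ j, ‖h j‖ ^ 2 := by
    rw [sum_comm]
    refine sum_le_sum fun j _ => ?_
    simpa only [Real.norm_eq_abs, sq_abs] using hb.sum_inner_products_le (s := univ) (h j)
  have hne : (univ : Finset (Fin (finrank ℝ U))).Nonempty := univ_nonempty_iff.mpr ⟨⟨0, hU⟩⟩
  obtain ⟨i, -, hi⟩ := exists_le_of_sum_le hne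
    (f := fun i => finrank ℝ U * ∑ j, inner ℝ (b i : E) (h j) ^ 2)
    (g := fun _ => ∑ j, ‖h j‖ ^ 2) <| by
      rw [← mul_sum, sum_const, card_univ, Fintype.card_fin, nsmul_eq_mul]
      gcongr
  exact ⟨b i, (b i).2, hb.1 i, hi⟩

theorem finrank_le_finrank_orthogonal_span_singleton_add_one [FiniteDimensional ℝ E] (w : E) :
    finrank ℝ E ≤ finrank ℝ (ℝ ∙ w)ᗮ + 1 := by
  have hspan : finrank ℝ (ℝ ∙ w) ≤ 1 := by
    simpa using finrank_span_le_card (R := ℝ) ({w} : Set E)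
  have := (ℝ ∙ w).finrank_add_finrank_orthogonal
  omega

end InnerProductSpace

theorem exists_orthogonal_direction_small_energy_general (d N K : ℕ) (hN : 1 ≤ N)
    (H : Matrix (Fin d) (Fin N) ℝ) (hH : H ∈ OB d (Fin N))
    (w : Fin d → ℝ)
    (τ : ℝ) (hτ : 0 < τ)
    (hτ' : τ < 2 * ((d : ℝ) - 2) / (1 + ((K % 2 : ℕ) : ℝ) / (K : ℝ))) :
    ∃ a : Fin d → ℝ, (∑ r, (a r) ^ 2 = 1) ∧ (∑ r, a r * w r = 0) ∧
      (∑ j : Fin N, (∑ r, H r j * a r) ^ 2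
        < 2 * (N : ℝ) / (τ * (1 + ((K % 2 : ℕ) : ℝ) / (K : ℝ)) + 2)) := by
  set c : ℝ := 1 + ((K % 2 : ℕ) : ℝ) / (K : ℝ)
  have hτc : τ * c < 2 * ((d : ℝ) - 2) := (lt_div_iff₀ (by positivity)).mp hτ'
  set U := (ℝ ∙ WithLp.toLp 2 w)ᗮ
  have hdim : (d : ℝ) ≤ finrank ℝ U + 1 := by
    have := finrank_le_finrank_orthogonal_span_singleton_add_one (WithLp.toLp 2 w)
    rw [finrank_euclideanSpace_fin] at this
    exact_mod_cast this
  have hU : (0 : ℝ) < finrank ℝ U := by nlinarith [mul_pos hτ (by positivity : 0 < c)]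
  obtain ⟨u, hu, hu_norm, hu_energy⟩ :=
    U.exists_mem_norm_eq_one_finrank_mul_sum_inner_sq_le (by exact_mod_cast hU)
      (fun j => WithLp.toLp 2 fun r => H r j)
  have hcol (j : Fin N) : ‖WithLp.toLp 2 fun r => H r j‖ ^ 2 = 1 := by
    simpa [EuclideanSpace.norm_sq_eq] using hH j
  simp only [hcol, sum_const, card_univ, Fintype.card_fin, nsmul_eq_mul, mul_one,
    PiLp.inner_apply] at hu_energy
  refine ⟨u.ofLp, ?_, ?_, ?_⟩
  · simpa [hu_norm] using (EuclideanSpace.norm_sq_eq u).symm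
  · have hwu := Submodule.mem_orthogonal_singleton_iff_inner_right.mp hu
    simpa [PiLp.inner_apply, mul_comm] using hwu
  · calc ∑ j : Fin N, (∑ r, H r j * u r) ^ 2
        ≤ N / finrank ℝ U := by
          rw [le_div_iff₀' hU]
          simpa [mul_comm] using hu_energy
      _ < 2 * N / (τ * c + 2) := by
          have hN' : (0 : ℝ) < N := by exact_mod_cast hN
          rw [div_lt_div_iff₀ hU (by positivity)]
          nlinarith

theorem exists_orthogonal_direction_small_energy (d N K : ℕ) (hd : 1 ≤ d) (hN : 1 ≤ N)
    (hK : 1 ≤ K)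
    (H : Matrix (Fin d) (Fin N) ℝ) (hH : H ∈ OB d (Fin N))
    (w : Fin d → ℝ) (hw : ∑ r, (w r) ^ 2 = 1)
    (τ : ℝ) (hτ : 0 < τ)
    (hτ' : τ < 2 * ((d : ℝ) - 2) / (1 + ((K % 2 : ℕ) : ℝ) / (K : ℝ))) :
    ∃ a : Fin d → ℝ, (∑ r, (a r) ^ 2 = 1) ∧ (∑ r, a r * w r = 0) ∧
      (∑ j : Fin N, (∑ r, H r j * a r) ^ 2
        < 2 * (N : ℝ) / (τ * (1 + ((K % 2 : ℕ) : ℝ) / (K : ℝ)) + 2)) :=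
  exists_orthogonal_direction_small_energy_general d N K hN H hH w τ hτ hτ'
end
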